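/- arXiv:0801.4959 — 2 statements merged into one kernel-verified Lean document; each statement's English description precedes it below -/
import Mathlib

section
/- For compactly supported smooth f ∈ C_c^∞(0,1), the function Rf defined by (Rf)(x) = ∫₀¹ G(x,y) f(y) w(y) dy is differentiable on (0,1) with (Rf)'(x) = p(x)^{-1} ∫ₓ¹ f(y) w(y) dy, and consequently L(Rf) = f, i.e. −w^{-1}(p (Rf)')' = f on (0,1). -/
open MeasureTheory Set

noncomputable def pp (ε x : ℝ) : ℝ := (1 - x) ^ ((1:ℝ) + 1/ε) * (1 + x) ^ ((1:ℝ) - 1/ε)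

noncomputable def ww (ε x : ℝ) : ℝ := x⁻¹ * (1 - x) ^ ((1:ℝ)/ε) * (1 + x) ^ (-(1:ℝ)/ε)

noncomputable def gam (ε x : ℝ) : ℝ := ∫ t in Ioo (0:ℝ) x, (pp ε t)⁻¹

noncomputable def Gker (ε x y : ℝ) : ℝ := gam ε (min x y)

/-- (Rf)(x) = ∫₀¹ G(x,y) f(y) w(y) dy. -/
noncomputable def Rop (ε : ℝ) (f : ℝ → ℝ) (x : ℝ) : ℝ :=
  ∫ y in Ioo (0:ℝ) 1, Gker ε x y * f y * ww ε y

lemma pp_pos (ε : ℝ) {x : ℝ} (hx : x ∈ Ioo (-1:ℝ) 1) : 0 < pp ε x := by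
  have h1 : (0:ℝ) < 1 - x := by linarith [hx.2]
  have h2 : (0:ℝ) < 1 + x := by linarith [hx.1]
  exact mul_pos (Real.rpow_pos_of_pos h1 _) (Real.rpow_pos_of_pos h2 _)

lemma ww_pos (ε : ℝ) {x : ℝ} (hx : x ∈ Ioo (0:ℝ) 1) : 0 < ww ε x := by
  have h1 : (0:ℝ) < 1 - x := by linarith [hx.2]
  have h2 : (0:ℝ) < 1 + x := by linarith [hx.1]
  exact mul_pos (mul_pos (inv_pos.mpr hx.1) (Real.rpow_pos_of_pos h1 _))
    (Real.rpow_pos_of_pos h2 _)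

lemma ppinv_contOn (ε : ℝ) : ContinuousOn (fun t => (pp ε t)⁻¹) (Ioo (-1:ℝ) 1) := by
  intro x hx
  apply ContinuousAt.continuousWithinAt
  have h1 : (0:ℝ) < 1 - x := by linarith [hx.2]
  have h2 : (0:ℝ) < 1 + x := by linarith [hx.1]
  have hc : ContinuousAt (pp ε) x := by
    unfold pp
    exact ((continuousAt_const.sub continuousAt_id).rpow_const (Or.inl h1.ne')).mul
      ((continuousAt_const.add continuousAt_id).rpow_const (Or.inl h2.ne'))
  exact hc.inv₀ (pp_pos ε hx).ne'

lemma gam_eq (ε x : ℝ) (hx : 0 ≤ x) : gam ε x = ∫ t in (0:ℝ)..x, (pp ε t)⁻¹ := by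
  rw [intervalIntegral.integral_of_le hx, integral_Ioc_eq_integral_Ioo]
  rfl

lemma gam_hasDerivAt (ε : ℝ) {x : ℝ} (hx : x ∈ Ioo (0:ℝ) 1) :
    HasDerivAt (gam ε) ((pp ε x)⁻¹) x := by
  have hx01 : x ∈ Ioo (-1:ℝ) 1 := ⟨by linarith [hx.1], hx.2⟩
  have hsub : uIcc (0:ℝ) x ⊆ Ioo (-1:ℝ) 1 := by
    rw [uIcc_of_le hx.1.le]
    exact fun t ht => ⟨by linarith [ht.1], lt_of_le_of_lt ht.2 hx.2⟩
  have hint : IntervalIntegrable (fun t => (pp ε t)⁻¹) volume 0 x :=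
    ((ppinv_contOn ε).mono hsub).intervalIntegrable
  have hmeas : StronglyMeasurableAtFilter (fun t => (pp ε t)⁻¹) (nhds x) volume :=
    (ppinv_contOn ε).stronglyMeasurableAtFilter isOpen_Ioo x hx01
  have hcont : ContinuousAt (fun t => (pp ε t)⁻¹) x :=
    (ppinv_contOn ε).continuousAt (isOpen_Ioo.mem_nhds hx01)
  have hF : HasDerivAt (fun u => ∫ t in (0:ℝ)..u, (pp ε t)⁻¹) ((pp ε x)⁻¹) x :=
    intervalIntegral.integral_hasDerivAt_right hint hmeas hcont
  apply hF.congr_of_eventuallyEq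
  filter_upwards [Ioi_mem_nhds hx.1] with u hu
  exact gam_eq ε u (le_of_lt hu)

/-- For f ∈ C_c^∞(0,1), Rf is differentiable on (0,1) with
(Rf)'(x) = p(x)⁻¹ ∫ₓ¹ f(y)w(y) dy, and L(Rf) = f, i.e. −w⁻¹ (p (Rf)')' = f on (0,1). -/
theorem R_inverts_L_on_test_functions (ε : ℝ) (hε : ε ∈ Ioo (0:ℝ) 2)
    (f : ℝ → ℝ) (hf : ContDiff ℝ (⊤ : ℕ∞) f) (hsupp : HasCompactSupport f)
    (hsub : tsupport f ⊆ Ioo (0:ℝ) 1) :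
    (∀ x ∈ Ioo (0:ℝ) 1,
        HasDerivAt (Rop ε f) ((pp ε x)⁻¹ * ∫ y in Ioo x 1, f y * ww ε y) x) ∧
      ∀ x ∈ Ioo (0:ℝ) 1,
        -(ww ε x)⁻¹ * deriv (fun z => pp ε z * deriv (Rop ε f) z) x = f x := by
  set fw : ℝ → ℝ := fun y => f y * ww ε y with hfw_def
  -- fw is continuous
  have hfw_cont : Continuous fw := by
    rw [continuous_iff_continuousAt]
    intro y
    by_cases hy : y ∈ Ioo (0:ℝ) 1
    · have h1 : (0:ℝ) < 1 - y := by linarith [hy.2]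
      have h2 : (0:ℝ) < 1 + y := by linarith [hy.1]
      have hww : ContinuousAt (ww ε) y := by
        unfold ww
        exact ((continuousAt_id.inv₀ hy.1.ne').mul
          ((continuousAt_const.sub continuousAt_id).rpow_const (Or.inl h1.ne'))).mul
          ((continuousAt_const.add continuousAt_id).rpow_const (Or.inl h2.ne'))
      exact (hf.continuous.continuousAt).mul hww
    · have hy' : y ∉ tsupport f := fun h => hy (hsub h)
      have hev : fw =ᶠ[nhds y] fun _ => (0:ℝ) := by
        filter_upwards [(isClosed_tsupport f).isOpen_compl.mem_nhds hy'] with z hz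
        simp [hfw_def, image_eq_zero_of_notMem_tsupport hz]
      exact hev.continuousAt
  have hfw_supp : HasCompactSupport fw := hsupp.mul_right
  have hfw_int : Integrable fw := hfw_cont.integrable_of_hasCompactSupport hfw_supp
  -- g = gam · fw is continuous
  set g : ℝ → ℝ := fun y => gam ε y * fw y with hg_def
  have hg_cont : Continuous g := by
    rw [continuous_iff_continuousAt]
    intro y
    by_cases hy : y ∈ Ioo (0:ℝ) 1
    · exact ((gam_hasDerivAt ε hy).continuousAt).mul hfw_cont.continuousAt
    · have hy' : y ∉ tsupport f := fun h => hy (hsub h)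
      have hev : g =ᶠ[nhds y] fun _ => (0:ℝ) := by
        filter_upwards [(isClosed_tsupport f).isOpen_compl.mem_nhds hy'] with z hz
        simp [hg_def, hfw_def, image_eq_zero_of_notMem_tsupport hz]
      exact hev.continuousAt
  -- splitting of Rop
  have split : ∀ x ∈ Ioo (0:ℝ) 1,
      Rop ε f x = (∫ y in Ioo (0:ℝ) x, g y) + gam ε x * ∫ y in Ioo x 1, fw y := by
    intro x hx
    have hunion : Ioo (0:ℝ) x ∪ Ico x 1 = Ioo 0 1 := Ioo_union_Ico_eq_Ioo hx.1 hx.2.le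
    have hdisj : Disjoint (Ioo (0:ℝ) x) (Ico x 1) := by
      rw [Set.disjoint_left]
      rintro y ⟨_, h2⟩ ⟨h3, _⟩
      exact absurd h3 (not_le.mpr h2)
    have heq1 : EqOn (fun y => Gker ε x y * f y * ww ε y) g (Ioo (0:ℝ) x) := by
      intro y hy
      simp only [hg_def, hfw_def, Gker, min_eq_right hy.2.le]
      ring
    have heq2 : EqOn (fun y => Gker ε x y * f y * ww ε y) (fun y => gam ε x * fw y)
        (Ico x 1) := by
      intro y hy
      simp only [hfw_def, Gker, min_eq_left hy.1]
      ring
    have hint1 : IntegrableOn (fun y => Gker ε x y * f y * ww ε y) (Ioo (0:ℝ) x) :=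
      ((hg_cont.integrable_of_hasCompactSupport hfw_supp.mul_left).integrableOn).congr_fun
        (fun y hy => (heq1 hy).symm) measurableSet_Ioo
    have hint2 : IntegrableOn (fun y => Gker ε x y * f y * ww ε y) (Ico x 1) :=
      ((hfw_int.const_mul (gam ε x)).integrableOn).congr_fun
        (fun y hy => (heq2 hy).symm) measurableSet_Ico
    unfold Rop
    rw [← hunion, setIntegral_union hdisj measurableSet_Ico hint1 hint2,
      setIntegral_congr_fun measurableSet_Ioo heq1,
      setIntegral_congr_fun measurableSet_Ico heq2,
      integral_const_mul, integral_Ico_eq_integral_Ioo]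
  -- derivative of x ↦ ∫_{Ioo x 1} fw
  have hJ : ∀ x ∈ Ioo (0:ℝ) 1,
      HasDerivAt (fun u => ∫ y in Ioo u 1, fw y) (-(fw x)) x := by
    intro x hx
    have hF : HasDerivAt (fun u => ∫ y in u..(1:ℝ), fw y) (-(fw x)) x :=
      intervalIntegral.integral_hasDerivAt_left (hfw_cont.intervalIntegrable _ _)
        (hfw_cont.stronglyMeasurable.stronglyMeasurableAtFilter)
        hfw_cont.continuousAt
    apply hF.congr_of_eventuallyEq
    filter_upwards [Iio_mem_nhds hx.2] with u hu
    rw [intervalIntegral.integral_of_le (le_of_lt hu), integral_Ioc_eq_integral_Ioo]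
  -- key derivative fact
  have key : ∀ x ∈ Ioo (0:ℝ) 1,
      HasDerivAt (Rop ε f) ((pp ε x)⁻¹ * ∫ y in Ioo x 1, fw y) x := by
    intro x hx
    have hA : HasDerivAt (fun u => ∫ y in Ioo (0:ℝ) u, g y) (g x) x := by
      have hF : HasDerivAt (fun u => ∫ y in (0:ℝ)..u, g y) (g x) x :=
        intervalIntegral.integral_hasDerivAt_right (hg_cont.intervalIntegrable _ _)
          (hg_cont.stronglyMeasurable.stronglyMeasurableAtFilter)
          hg_cont.continuousAt
      apply hF.congr_of_eventuallyEq
      filter_upwards [Ioi_mem_nhds hx.1] with u hu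
      rw [intervalIntegral.integral_of_le (le_of_lt hu), integral_Ioc_eq_integral_Ioo]
    have hB : HasDerivAt (fun u => gam ε u * ∫ y in Ioo u 1, fw y)
        ((pp ε x)⁻¹ * (∫ y in Ioo x 1, fw y) + gam ε x * (-(fw x))) x :=
      (gam_hasDerivAt ε hx).mul (hJ x hx)
    have hsum := hA.add hB
    have heq : Rop ε f =ᶠ[nhds x]
        (fun u => (∫ y in Ioo (0:ℝ) u, g y) + gam ε u * ∫ y in Ioo u 1, fw y) := by
      filter_upwards [isOpen_Ioo.mem_nhds hx] with u hu
      exact split u hu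
    have hval : g x + ((pp ε x)⁻¹ * (∫ y in Ioo x 1, fw y) + gam ε x * (-(fw x)))
        = (pp ε x)⁻¹ * ∫ y in Ioo x 1, fw y := by
      simp only [hg_def]; ring
    rw [← hval]
    exact hsum.congr_of_eventuallyEq heq
  refine ⟨key, ?_⟩
  intro x hx
  have hx1 : x ∈ Ioo (-1:ℝ) 1 := ⟨by linarith [hx.1], hx.2⟩
  have heq : (fun z => pp ε z * deriv (Rop ε f) z) =ᶠ[nhds x]
      (fun z => ∫ y in Ioo z 1, fw y) := by
    filter_upwards [isOpen_Ioo.mem_nhds hx] with z hz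
    rw [(key z hz).deriv, ← mul_assoc,
      mul_inv_cancel₀ (pp_pos ε ⟨by linarith [hz.1], hz.2⟩).ne', one_mul]
  have hder : deriv (fun z => pp ε z * deriv (Rop ε f) z) x = -(fw x) := by
    rw [heq.deriv_eq, (hJ x hx).deriv]
  rw [hder]
  have hw := (ww_pos ε hx).ne'
  simp only [hfw_def]
  field_simp
end

section
/- The potential V(s) = −c(s)c''(s)·p(φ(s))/φ'(s) − c(s)c'(s)·(d/ds)[p(φ(s))/φ'(s)] satisfies V(s) ∼ (3/4) s^{-2} as s → 0+ and V(s) ∼ (1/ε² − 1/4)(β−s)^{-2} as s → β−. -/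
open MeasureTheory Set Filter

noncomputable def betaIntegrand (y : ℝ) : ℝ :=
  y ^ (-(1:ℝ)/2) * (1 - y) ^ (-(1:ℝ)/2) * (1 + y) ^ (-(1:ℝ)/2)

noncomputable def psi (t : ℝ) : ℝ := ∫ y in Ioo (0:ℝ) t, betaIntegrand y

noncomputable def cfun (ε : ℝ) (φ : ℝ → ℝ) (s : ℝ) : ℝ :=
  (ww ε (φ s) * pp ε (φ s)) ^ (-(1:ℝ)/4)

/-- The potential V(s) = −c c'' · p(φ)/φ' − c c' · (d/ds)[p(φ)/φ']. -/
noncomputable def Vpot (ε : ℝ) (φ : ℝ → ℝ) (s : ℝ) : ℝ :=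
  -cfun ε φ s * deriv (deriv (cfun ε φ)) s * (pp ε (φ s) / deriv φ s)
    - cfun ε φ s * deriv (cfun ε φ) s * deriv (fun u => pp ε (φ u) / deriv φ u) s

open scoped Topology

/-! In the variable `x = φ s` everything is a power weight `x ^ α * (1 - x) ^ β * (1 + x) ^ γ`:
`φ' = √(x (1 - x²))`, `c = x ^ (1/4) (1 - x) ^ (-(1 + 2/ε)/4) (1 + x) ^ (-(1 - 2/ε)/4)` and
`p(φ)/φ' = c⁻²`. The chain rule then turns `V` into the rational function
`(3/16 + (1/ε² - 5/8) x² + 3/16 x⁴) / (x (1 - x²))`, so `V ~ 3 / (16 x)` as `x → 0` and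
`V ~ (1/ε² - 1/4) / (2 (1 - x))` as `x → 1`. L'Hôpital's rule gives `ψ(x)² ~ 4 x` and
`(β - ψ(x))² ~ 2 (1 - x)`, which converts these into the claimed rates in `s`. -/

noncomputable def powWeight (α β γ t : ℝ) : ℝ := t ^ α * (1 - t) ^ β * (1 + t) ^ γ

noncomputable def logDerivPowWeight (α β γ t : ℝ) : ℝ := α / t - β / (1 - t) + γ / (1 + t)

section PowWeight

variable {α β γ α' β' γ' t : ℝ}

theorem powWeight_zero (t : ℝ) : powWeight 0 0 0 t = 1 := by
  simp [powWeight]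

theorem powWeight_pos (ht : t ∈ Ioo (0:ℝ) 1) : 0 < powWeight α β γ t := by
  have : 0 < 1 - t := by linarith [ht.2]
  have : 0 < 1 + t := by linarith [ht.1]
  unfold powWeight
  have := ht.1
  positivity

theorem powWeight_mul (ht : t ∈ Ioo (0:ℝ) 1) :
    powWeight α β γ t * powWeight α' β' γ' t
      = powWeight (α + α') (β + β') (γ + γ') t := by
  have h₁ : 0 < 1 - t := by linarith [ht.2]
  have h₂ : 0 < 1 + t := by linarith [ht.1]
  simp only [powWeight, Real.rpow_add ht.1, Real.rpow_add h₁, Real.rpow_add h₂]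
  ring

theorem powWeight_div (ht : t ∈ Ioo (0:ℝ) 1) :
    powWeight α β γ t / powWeight α' β' γ' t
      = powWeight (α - α') (β - β') (γ - γ') t := by
  have h₁ : 0 < 1 - t := by linarith [ht.2]
  have h₂ : 0 < 1 + t := by linarith [ht.1]
  simp only [powWeight, Real.rpow_sub ht.1, Real.rpow_sub h₁, Real.rpow_sub h₂]
  field_simp

theorem powWeight_rpow (ht : t ∈ Ioo (0:ℝ) 1) (r : ℝ) :
    powWeight α β γ t ^ r = powWeight (α * r) (β * r) (γ * r) t := by
  have h₁ : 0 < 1 - t := by linarith [ht.2]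
  have h₂ : 0 < 1 + t := by linarith [ht.1]
  have := ht.1
  simp only [powWeight, Real.rpow_mul ht.1.le, Real.rpow_mul h₁.le, Real.rpow_mul h₂.le]
  rw [Real.mul_rpow (by positivity) (by positivity), Real.mul_rpow (by positivity) (by positivity)]

variable (α β γ) in
theorem hasDerivAt_powWeight (ht : t ∈ Ioo (0:ℝ) 1) :
    HasDerivAt (powWeight α β γ) (powWeight α β γ t * logDerivPowWeight α β γ t) t := by
  have h₁ : 0 < 1 - t := by linarith [ht.2]
  have h₂ : 0 < 1 + t := by linarith [ht.1]
  have d₀ := Real.hasDerivAt_rpow_const (p := α) (Or.inl ht.1.ne')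
  have d₁ := (Real.hasDerivAt_rpow_const (p := β) (Or.inl h₁.ne')).comp t
    ((hasDerivAt_id t).const_sub 1)
  have d₂ := (Real.hasDerivAt_rpow_const (p := γ) (Or.inl h₂.ne')).comp t
    ((hasDerivAt_id t).const_add 1)
  refine ((d₀.mul d₁).mul d₂).congr_deriv ?_
  simp only [powWeight, logDerivPowWeight, Function.comp_apply, Pi.mul_apply,
    Real.rpow_sub_one ht.1.ne', Real.rpow_sub_one h₁.ne', Real.rpow_sub_one h₂.ne']
  field_simp
  ring

variable (α β γ) in
theorem hasDerivAt_logDerivPowWeight (ht : t ∈ Ioo (0:ℝ) 1) :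
    HasDerivAt (logDerivPowWeight α β γ)
      (-α / t ^ 2 - β / (1 - t) ^ 2 - γ / (1 + t) ^ 2) t := by
  have h₁ : 1 - t ≠ 0 := by linarith [ht.2]
  have h₂ : 1 + t ≠ 0 := by linarith [ht.1]
  have d₀ : HasDerivAt (fun u : ℝ => α / u) (-(α / t ^ 2)) t := by
    simpa [div_eq_mul_inv] using (hasDerivAt_inv ht.1.ne').const_mul α
  have d₁ : HasDerivAt (fun u : ℝ => β / (1 - u)) (β / (1 - t) ^ 2) t := by
    simpa [div_eq_mul_inv] using
      ((hasDerivAt_inv h₁).comp t ((hasDerivAt_id t).const_sub 1)).const_mul β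
  have d₂ : HasDerivAt (fun u : ℝ => γ / (1 + u)) (-(γ / (1 + t) ^ 2)) t := by
    simpa [div_eq_mul_inv] using
      ((hasDerivAt_inv h₂).comp t ((hasDerivAt_id t).const_add 1)).const_mul γ
  refine ((d₀.sub d₁).add d₂).congr_deriv ?_
  ring

theorem potential_powWeight_comp {φ : ℝ → ℝ} {s : ℝ} (α β γ : ℝ)
    (hφ : ∀ᶠ u in 𝓝 s, φ u ∈ Ioo (0:ℝ) 1 ∧
      HasDerivAt φ (powWeight (1/2) (1/2) (1/2) (φ u)) u) :
    -(powWeight α β γ ∘ φ) s * deriv (deriv (powWeight α β γ ∘ φ)) s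
        * (powWeight (-2 * α) (-2 * β) (-2 * γ) ∘ φ) s
      - (powWeight α β γ ∘ φ) s * deriv (powWeight α β γ ∘ φ) s
        * deriv (powWeight (-2 * α) (-2 * β) (-2 * γ) ∘ φ) s
    = φ s * (1 - φ s) * (1 + φ s) * (logDerivPowWeight α β γ (φ s) ^ 2
        + (α / φ s ^ 2 + β / (1 - φ s) ^ 2 + γ / (1 + φ s) ^ 2)
        - logDerivPowWeight α β γ (φ s) * logDerivPowWeight (1/2) (1/2) (1/2) (φ s)) := by
  obtain ⟨hx, hφx⟩ := hφ.self_of_nhds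
  have hcomp : ∀ {a b c u : ℝ}, φ u ∈ Ioo (0:ℝ) 1 →
      HasDerivAt φ (powWeight (1/2) (1/2) (1/2) (φ u)) u →
      HasDerivAt (powWeight a b c ∘ φ) (powWeight a b c (φ u) * logDerivPowWeight a b c (φ u)
        * powWeight (1/2) (1/2) (1/2) (φ u)) u :=
    fun hu hφu => (hasDerivAt_powWeight _ _ _ hu).comp _ hφu
  have hd : deriv (powWeight α β γ ∘ φ) =ᶠ[𝓝 s]
      (powWeight α β γ * logDerivPowWeight α β γ * powWeight (1/2) (1/2) (1/2)) ∘ φ :=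
    hφ.mono fun u hu => (hcomp hu.1 hu.2).deriv
  have hdd := (((hasDerivAt_powWeight α β γ hx).mul
    (hasDerivAt_logDerivPowWeight α β γ hx)).mul
      (hasDerivAt_powWeight (1/2) (1/2) (1/2) hx)).comp s hφx
  rw [hd.deriv_eq, hdd.deriv, (hcomp (a := α) (b := β) (c := γ) hx hφx).deriv,
    (hcomp (a := -2 * α) (b := -2 * β) (c := -2 * γ) hx hφx).deriv]
  set x := φ s
  have hPQ : powWeight α β γ x ^ 2 * powWeight (-2 * α) (-2 * β) (-2 * γ) x = 1 := by
    rw [sq, powWeight_mul hx, powWeight_mul hx, ← powWeight_zero x]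
    ring_nf
  have hm : powWeight (1/2) (1/2) (1/2) x ^ 2 = x * (1 - x) * (1 + x) := by
    rw [sq, powWeight_mul hx]
    norm_num [powWeight]
  have hL : logDerivPowWeight (-2 * α) (-2 * β) (-2 * γ) x
      = -2 * logDerivPowWeight α β γ x := by
    unfold logDerivPowWeight
    ring
  simp only [Function.comp_apply, Pi.mul_apply, hL]
  set ℓ := logDerivPowWeight α β γ x
  set E := ℓ ^ 2 + (α / x ^ 2 + β / (1 - x) ^ 2 + γ / (1 + x) ^ 2)
    - ℓ * logDerivPowWeight (1/2) (1/2) (1/2) x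
  linear_combination (powWeight (1/2) (1/2) (1/2) x ^ 2 * E) * hPQ + E * hm

end PowWeight

section Psi

theorem betaIntegrand_eq_powWeight :
    betaIntegrand = powWeight (-(1:ℝ)/2) (-(1:ℝ)/2) (-(1:ℝ)/2) := rfl

theorem betaIntegrand_pos {t : ℝ} (ht : t ∈ Ioo (0:ℝ) 1) : 0 < betaIntegrand t :=
  powWeight_pos ht

theorem intervalIntegrable_betaIntegrand : IntervalIntegrable betaIntegrand volume 0 1 := by
  have hsing : IntervalIntegrable (fun y : ℝ => y ^ (-(1:ℝ)/2)) volume 0 (1/2) :=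
    intervalIntegral.intervalIntegrable_rpow' (by norm_num)
  have hsing' : IntervalIntegrable (fun y : ℝ => (1 - y) ^ (-(1:ℝ)/2)) volume (1/2) 1 := by
    have h := (hsing.comp_sub_left 1).symm
    norm_num at h ⊢
    exact h
  have hreg : ∀ {f : ℝ → ℝ} {a b : ℝ}, ContinuousOn f (uIcc a b) →
      (∀ y ∈ uIcc a b, 0 < f y) → ContinuousOn (fun y => f y ^ (-(1:ℝ)/2)) (uIcc a b) :=
    fun hf hpos => hf.rpow_const fun y hy => Or.inl (hpos y hy).ne'
  have hleft : ∀ y ∈ uIcc (0:ℝ) (1/2), 0 < 1 - y ∧ 0 < 1 + y := fun y hy => by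
    rw [uIcc_of_le (by norm_num)] at hy; constructor <;> linarith [hy.1, hy.2]
  have hright : ∀ y ∈ uIcc (1/2:ℝ) 1, 0 < y ∧ 0 < 1 + y := fun y hy => by
    rw [uIcc_of_le (by norm_num)] at hy; constructor <;> linarith [hy.1, hy.2]
  refine IntervalIntegrable.trans (b := 1/2) ?_ ?_
  · exact (hsing.mul_continuousOn (hreg (by fun_prop) fun y hy => (hleft y hy).1)).mul_continuousOn
      (hreg (by fun_prop) fun y hy => (hleft y hy).2)
  · exact (hsing'.continuousOn_mul (hreg (by fun_prop) fun y hy => (hright y hy).1)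
      ).mul_continuousOn (hreg (by fun_prop) fun y hy => (hright y hy).2)

theorem psi_eq_intervalIntegral {t : ℝ} (ht : 0 ≤ t) :
    psi t = ∫ y in (0:ℝ)..t, betaIntegrand y := by
  rw [intervalIntegral.integral_of_le ht, integral_Ioc_eq_integral_Ioo, psi]

theorem psi_zero : psi 0 = 0 := by simp [psi]

theorem continuousOn_psi : ContinuousOn psi (Icc 0 1) := by
  have h := intervalIntegral.continuousOn_primitive_interval' intervalIntegrable_betaIntegrand
    left_mem_uIcc
  rw [uIcc_of_le zero_le_one] at h
  exact h.congr fun t ht => psi_eq_intervalIntegral ht.1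

theorem hasDerivAt_psi {t : ℝ} (ht : t ∈ Ioo (0:ℝ) 1) :
    HasDerivAt psi (betaIntegrand t) t := by
  have hmeas : Measurable betaIntegrand := by unfold betaIntegrand; fun_prop
  have hcont : ContinuousAt betaIntegrand t := by
    rw [betaIntegrand_eq_powWeight]; exact (hasDerivAt_powWeight _ _ _ ht).continuousAt
  have h := intervalIntegral.integral_hasDerivAt_right
    (intervalIntegrable_betaIntegrand.mono_set (uIcc_subset_uIcc_left (by simp [ht.1.le, ht.2.le])))
    hmeas.stronglyMeasurable.stronglyMeasurableAtFilter
    hcont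
  exact h.congr_of_eventuallyEq
    (eventually_ge_nhds ht.1 |>.mono fun u hu => psi_eq_intervalIntegral hu)

theorem psi_strictMonoOn : StrictMonoOn psi (Icc 0 1) := by
  refine strictMonoOn_of_deriv_pos (convex_Icc 0 1) continuousOn_psi fun t ht => ?_
  rw [interior_Icc] at ht
  rw [(hasDerivAt_psi ht).deriv]
  exact betaIntegrand_pos ht

theorem psi_one_pos : 0 < psi 1 := by
  simpa [psi_zero] using psi_strictMonoOn (left_mem_Icc.2 zero_le_one)
    (right_mem_Icc.2 zero_le_one) zero_lt_one

theorem psi_mem_Icc {t : ℝ} (ht : t ∈ Icc (0:ℝ) 1) : psi t ∈ Icc 0 (psi 1) :=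
  ⟨psi_zero ▸ psi_strictMonoOn.monotoneOn (left_mem_Icc.2 zero_le_one) ht ht.1,
    psi_strictMonoOn.monotoneOn ht (right_mem_Icc.2 zero_le_one) ht.2⟩

theorem psi_mem_Ioo {t : ℝ} (ht : t ∈ Ioo (0:ℝ) 1) : psi t ∈ Ioo 0 (psi 1) :=
  ⟨psi_zero ▸ psi_strictMonoOn (left_mem_Icc.2 zero_le_one) (Ioo_subset_Icc_self ht) ht.1,
    psi_strictMonoOn (Ioo_subset_Icc_self ht) (right_mem_Icc.2 zero_le_one) ht.2⟩

theorem tendsto_psi_nhdsGT_zero : Tendsto psi (𝓝[>] 0) (𝓝 0) := by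
  have h := (continuousOn_psi.continuousWithinAt (left_mem_Icc.2 zero_le_one)).tendsto
  rw [psi_zero] at h
  exact h.mono_left (nhdsWithin_Ioo_eq_nhdsGT (zero_lt_one' ℝ) ▸
    nhdsWithin_mono _ Ioo_subset_Icc_self)

theorem tendsto_psi_nhdsLT_one : Tendsto psi (𝓝[<] 1) (𝓝 (psi 1)) :=
  (continuousOn_psi.continuousWithinAt (right_mem_Icc.2 zero_le_one)).tendsto.mono_left
    (nhdsWithin_Ioo_eq_nhdsLT (zero_lt_one' ℝ) ▸ nhdsWithin_mono _ Ioo_subset_Icc_self)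

theorem tendsto_psi_div_rpow_nhdsGT_zero :
    Tendsto (fun t => psi t / (2 * t ^ (1/2:ℝ))) (𝓝[>] 0) (𝓝 1) := by
  have hI : Ioo (0:ℝ) 1 ∈ 𝓝[>] 0 := Ioo_mem_nhdsGT (zero_lt_one' ℝ)
  have hroot : Tendsto (fun t : ℝ => 2 * t ^ (1/2:ℝ)) (𝓝[>] 0) (𝓝 0) := by
    have h : ContinuousAt (fun t : ℝ => 2 * t ^ (1/2:ℝ)) 0 := by fun_prop (disch := norm_num)
    simpa using h.tendsto.mono_left nhdsWithin_le_nhds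
  have hdiv : Tendsto (fun t => betaIntegrand t / t ^ (-(1:ℝ)/2)) (𝓝[>] 0) (𝓝 1) := by
    have h : ContinuousAt (fun t : ℝ => (1 - t) ^ (-(1:ℝ)/2) * (1 + t) ^ (-(1:ℝ)/2)) 0 := by
      fun_prop (disch := norm_num)
    have h₁ : Tendsto (fun t : ℝ => (1 - t) ^ (-(1:ℝ)/2) * (1 + t) ^ (-(1:ℝ)/2))
        (𝓝[>] 0) (𝓝 1) := by
      simpa using h.tendsto.mono_left nhdsWithin_le_nhds
    refine h₁.congr' (eventually_of_mem hI fun t ht => ?_)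
    simp only [betaIntegrand]
    rw [mul_assoc, mul_div_cancel_left₀ _ (Real.rpow_pos_of_pos ht.1 _).ne']
  exact HasDerivAt.lhopital_zero_nhdsGT
    (eventually_of_mem hI fun t ht => hasDerivAt_psi ht)
    (eventually_of_mem self_mem_nhdsWithin fun t (ht : 0 < t) =>
      ((Real.hasDerivAt_rpow_const (p := 1/2) (Or.inl ht.ne')).const_mul 2).congr_deriv
        (by norm_num; ring))
    (eventually_of_mem self_mem_nhdsWithin fun t (ht : 0 < t) => (Real.rpow_pos_of_pos ht _).ne')
    tendsto_psi_nhdsGT_zero hroot hdiv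

theorem tendsto_psi_one_sub_div_rpow_nhdsLT_one :
    Tendsto (fun t => (psi 1 - psi t) / (2 * (1 - t) ^ (1/2:ℝ))) (𝓝[<] 1)
      (𝓝 ((2:ℝ) ^ (-(1:ℝ)/2))) := by
  have hI : Ioo (0:ℝ) 1 ∈ 𝓝[<] 1 := Ioo_mem_nhdsLT (zero_lt_one' ℝ)
  have hroot : Tendsto (fun t : ℝ => 2 * (1 - t) ^ (1/2:ℝ)) (𝓝[<] 1) (𝓝 0) := by
    have h : ContinuousAt (fun t : ℝ => 2 * (1 - t) ^ (1/2:ℝ)) 1 := by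
      fun_prop (disch := norm_num)
    simpa using h.tendsto.mono_left nhdsWithin_le_nhds
  have hdiv : Tendsto (fun t => -betaIntegrand t / -(1 - t) ^ (-(1:ℝ)/2)) (𝓝[<] 1)
      (𝓝 ((2:ℝ) ^ (-(1:ℝ)/2))) := by
    have h : ContinuousAt (fun t : ℝ => t ^ (-(1:ℝ)/2) * (1 + t) ^ (-(1:ℝ)/2)) 1 := by
      fun_prop (disch := norm_num)
    have h₁ : Tendsto (fun t : ℝ => t ^ (-(1:ℝ)/2) * (1 + t) ^ (-(1:ℝ)/2)) (𝓝[<] 1)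
        (𝓝 ((2:ℝ) ^ (-(1:ℝ)/2))) := by
      have := h.tendsto.mono_left (nhdsWithin_le_nhds (s := Iio 1))
      norm_num at this ⊢
      exact this
    refine h₁.congr' (eventually_of_mem hI fun t ht => ?_)
    have : 0 < 1 - t := by linarith [ht.2]
    simp only [betaIntegrand, neg_div_neg_eq]
    rw [mul_right_comm, mul_div_cancel_right₀ _ (Real.rpow_pos_of_pos this _).ne']
  have hpsi : Tendsto (fun t => psi 1 - psi t) (𝓝[<] 1) (𝓝 0) := by
    simpa using tendsto_psi_nhdsLT_one.const_sub (psi 1)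
  exact HasDerivAt.lhopital_zero_nhdsLT
    (eventually_of_mem hI fun t ht => (hasDerivAt_psi ht).const_sub (psi 1))
    (eventually_of_mem self_mem_nhdsWithin fun t (ht : t < 1) =>
      (((Real.hasDerivAt_rpow_const (p := 1/2) (Or.inl (sub_pos.2 ht).ne')).comp t
        ((hasDerivAt_id t).const_sub 1)).const_mul 2).congr_deriv (by norm_num; ring))
    (eventually_of_mem self_mem_nhdsWithin fun t (ht : t < 1) =>
      neg_ne_zero.2 (Real.rpow_pos_of_pos (sub_pos.2 ht) _).ne')
    hpsi hroot hdiv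

theorem tendsto_psi_sq_div_nhdsGT_zero : Tendsto (fun t => psi t ^ 2 / t) (𝓝[>] 0) (𝓝 4) := by
  have h := (tendsto_psi_div_rpow_nhdsGT_zero.pow 2).const_mul 4
  rw [one_pow, mul_one] at h
  refine h.congr' (eventually_of_mem self_mem_nhdsWithin fun t (ht : 0 < t) => ?_)
  rw [div_pow, mul_pow, ← Real.sqrt_eq_rpow, Real.sq_sqrt ht.le]
  field_simp
  ring

theorem tendsto_psi_one_sub_sq_div_nhdsLT_one :
    Tendsto (fun t => (psi 1 - psi t) ^ 2 / (1 - t)) (𝓝[<] 1) (𝓝 2) := by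
  have h := (tendsto_psi_one_sub_div_rpow_nhdsLT_one.pow 2).const_mul 4
  rw [← Real.rpow_natCast, ← Real.rpow_mul zero_le_two] at h
  norm_num at h
  refine h.congr' (eventually_of_mem self_mem_nhdsWithin fun t (ht : t < 1) => ?_)
  rw [div_pow, mul_pow, ← Real.sqrt_eq_rpow, Real.sq_sqrt (sub_pos.2 ht).le]
  field_simp
  ring

end Psi

section Inverse

variable {φ : ℝ → ℝ} (hmaps : MapsTo φ (Icc 0 (psi 1)) (Icc (0:ℝ) 1))
  (hright : ∀ s ∈ Icc 0 (psi 1), psi (φ s) = s)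
include hmaps hright

theorem phi_psi {t : ℝ} (ht : t ∈ Icc (0:ℝ) 1) : φ (psi t) = t :=
  psi_strictMonoOn.injOn (hmaps (psi_mem_Icc ht)) ht (hright _ (psi_mem_Icc ht))

theorem phi_mem_Ioo {s : ℝ} (hs : s ∈ Ioo 0 (psi 1)) : φ s ∈ Ioo (0:ℝ) 1 := by
  have hs' := Ioo_subset_Icc_self hs
  constructor
  · refine (psi_strictMonoOn.lt_iff_lt (left_mem_Icc.2 zero_le_one) (hmaps hs')).1 ?_
    rw [psi_zero, hright s hs']
    exact hs.1
  · refine (psi_strictMonoOn.lt_iff_lt (hmaps hs') (right_mem_Icc.2 zero_le_one)).1 ?_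
    rw [hright s hs']
    exact hs.2

theorem image_phi_Ioo : φ '' Ioo 0 (psi 1) = Ioo 0 1 :=
  (image_subset_iff.2 fun _ => phi_mem_Ioo hmaps hright).antisymm fun t ht =>
    ⟨psi t, psi_mem_Ioo ht, phi_psi hmaps hright (Ioo_subset_Icc_self ht)⟩

theorem phi_monotoneOn : MonotoneOn φ (Ioo 0 (psi 1)) := by
  intro s₁ h₁ s₂ h₂ hle
  have h₁' := Ioo_subset_Icc_self h₁
  have h₂' := Ioo_subset_Icc_self h₂
  rw [← psi_strictMonoOn.le_iff_le (hmaps h₁') (hmaps h₂'), hright s₁ h₁',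
    hright s₂ h₂']
  exact hle

theorem hasDerivAt_phi {s : ℝ} (hs : s ∈ Ioo 0 (psi 1)) :
    HasDerivAt φ (powWeight (1/2) (1/2) (1/2) (φ s)) s := by
  have hx := phi_mem_Ioo hmaps hright hs
  have hU := isOpen_Ioo.mem_nhds hs
  have hcont : ContinuousAt φ s := by
    refine continuousAt_of_monotoneOn_of_image_mem_nhds (phi_monotoneOn hmaps hright) hU ?_
    rw [image_phi_Ioo hmaps hright]
    exact isOpen_Ioo.mem_nhds hx
  have h := HasDerivAt.of_local_left_inverse hcont (hasDerivAt_psi hx) (betaIntegrand_pos hx).ne'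
    (eventually_of_mem hU fun u hu => hright u (Ioo_subset_Icc_self hu))
  rwa [betaIntegrand_eq_powWeight, ← Real.rpow_neg_one, powWeight_rpow hx,
    show -(1:ℝ)/2 * -1 = 1/2 by norm_num] at h

theorem tendsto_phi_nhdsGT_zero : Tendsto φ (𝓝[>] 0) (𝓝[>] 0) := by
  have h := (phi_monotoneOn hmaps hright).tendsto_nhdsWithin_Ioo_right
    (nonempty_Ioo.2 psi_one_pos) (by rw [image_phi_Ioo hmaps hright]; exact bddBelow_Ioo)
  rw [image_phi_Ioo hmaps hright, csInf_Ioo zero_lt_one] at h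
  exact tendsto_nhdsWithin_iff.2 ⟨h, eventually_of_mem (Ioo_mem_nhdsGT psi_one_pos)
    fun s hs => (phi_mem_Ioo hmaps hright hs).1⟩

theorem tendsto_phi_nhdsLT_psi_one : Tendsto φ (𝓝[<] psi 1) (𝓝[<] 1) := by
  have h := (phi_monotoneOn hmaps hright).tendsto_nhdsWithin_Ioo_left
    (nonempty_Ioo.2 psi_one_pos) (by rw [image_phi_Ioo hmaps hright]; exact bddAbove_Ioo)
  rw [image_phi_Ioo hmaps hright, csSup_Ioo zero_lt_one] at h
  exact tendsto_nhdsWithin_iff.2 ⟨h, eventually_of_mem (Ioo_mem_nhdsLT psi_one_pos)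
    fun s hs => (phi_mem_Ioo hmaps hright hs).2⟩

end Inverse

noncomputable def VpotInX (ε x : ℝ) : ℝ :=
  (3/16 + (1/ε^2 - 5/8) * x^2 + 3/16 * x^4) / (x * (1 - x) * (1 + x))

section Potential

variable {ε x : ℝ}

theorem pp_eq_powWeight : pp ε x = powWeight 0 (1 + 1/ε) (1 - 1/ε) x := by
  rw [pp, powWeight, Real.rpow_zero, one_mul]

theorem ww_mul_pp_rpow (hx : x ∈ Ioo (0:ℝ) 1) :
    (ww ε x * pp ε x) ^ (-(1:ℝ)/4) = powWeight (1/4) (-(1 + 2/ε)/4) (-(1 - 2/ε)/4) x := by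
  have hww : ww ε x = powWeight (-1) (1/ε) (-1/ε) x := by rw [ww, powWeight, Real.rpow_neg_one]
  rw [hww, pp_eq_powWeight, powWeight_mul hx, powWeight_rpow hx]
  congr 1 <;> ring

theorem pp_div_powWeight_half (hx : x ∈ Ioo (0:ℝ) 1) :
    pp ε x / powWeight (1/2) (1/2) (1/2) x
      = powWeight (-2 * (1/4)) (-2 * (-(1 + 2/ε)/4)) (-2 * (-(1 - 2/ε)/4)) x := by
  rw [pp_eq_powWeight, powWeight_div hx]
  congr 1 <;> ring

theorem Vpot_eq {φ : ℝ → ℝ} (hmaps : MapsTo φ (Icc 0 (psi 1)) (Icc (0:ℝ) 1))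
    (hright : ∀ s ∈ Icc 0 (psi 1), psi (φ s) = s) {s : ℝ} (hs : s ∈ Ioo 0 (psi 1)) :
    Vpot ε φ s = VpotInX ε (φ s) := by
  have hφ : ∀ᶠ u in 𝓝 s, φ u ∈ Ioo (0:ℝ) 1 ∧
      HasDerivAt φ (powWeight (1/2) (1/2) (1/2) (φ u)) u :=
    eventually_of_mem (isOpen_Ioo.mem_nhds hs) fun u hu =>
      ⟨phi_mem_Ioo hmaps hright hu, hasDerivAt_phi hmaps hright hu⟩
  have hc : cfun ε φ =ᶠ[𝓝 s] powWeight (1/4) (-(1 + 2/ε)/4) (-(1 - 2/ε)/4) ∘ φ :=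
    hφ.mono fun u hu => ww_mul_pp_rpow hu.1
  have hq : (fun u => pp ε (φ u) / deriv φ u) =ᶠ[𝓝 s]
      powWeight (-2 * (1/4)) (-2 * (-(1 + 2/ε)/4)) (-2 * (-(1 - 2/ε)/4)) ∘ φ :=
    hφ.mono fun u hu => by
      dsimp only [Function.comp_apply]
      rw [hu.2.deriv]
      exact pp_div_powWeight_half hu.1
  rw [Vpot, hc.eq_of_nhds, hc.deriv_eq, hc.deriv.deriv_eq, hq.deriv_eq,
    show pp ε (φ s) / deriv φ s = _ from hq.eq_of_nhds, potential_powWeight_comp _ _ _ hφ]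
  obtain ⟨hx₀, hx₁⟩ := (hφ.self_of_nhds).1
  have : 1 - φ s ≠ 0 := by linarith
  have : 1 + φ s ≠ 0 := by linarith
  have := hx₀.ne'
  unfold VpotInX logDerivPowWeight
  field_simp
  ring

end Potential

theorem tendsto_mul_VpotInX_nhdsGT_zero (ε : ℝ) :
    Tendsto (fun x => x * VpotInX ε x) (𝓝[>] 0) (𝓝 (3/16)) := by
  have h : ContinuousAt
      (fun x : ℝ => (3/16 + (1/ε^2 - 5/8) * x^2 + 3/16 * x^4) / ((1 - x) * (1 + x))) 0 := by
    fun_prop (disch := norm_num)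
  have h₁ : Tendsto
      (fun x : ℝ => (3/16 + (1/ε^2 - 5/8) * x^2 + 3/16 * x^4) / ((1 - x) * (1 + x)))
      (𝓝[>] 0) (𝓝 (3/16)) := by
    convert h.tendsto.mono_left (nhdsWithin_le_nhds (s := Ioi 0)) using 2
    norm_num
  refine h₁.congr' (eventually_of_mem self_mem_nhdsWithin fun x (hx : 0 < x) => ?_)
  simp only [VpotInX]
  rw [← mul_div_assoc, mul_assoc x, mul_div_mul_left _ _ hx.ne']

theorem tendsto_one_sub_mul_VpotInX_nhdsLT_one (ε : ℝ) :
    Tendsto (fun x => (1 - x) * VpotInX ε x) (𝓝[<] 1) (𝓝 ((1/ε^2 - 1/4) / 2)) := by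
  have h : ContinuousAt
      (fun x : ℝ => (3/16 + (1/ε^2 - 5/8) * x^2 + 3/16 * x^4) / (x * (1 + x))) 1 := by
    fun_prop (disch := norm_num)
  have h₁ : Tendsto (fun x : ℝ => (3/16 + (1/ε^2 - 5/8) * x^2 + 3/16 * x^4) / (x * (1 + x)))
      (𝓝[<] 1) (𝓝 ((1/ε^2 - 1/4) / 2)) := by
    convert h.tendsto.mono_left (nhdsWithin_le_nhds (s := Iio 1)) using 2
    ring
  refine h₁.congr' (eventually_of_mem (Ioo_mem_nhdsLT zero_lt_one) fun x hx => ?_)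
  have : 1 - x ≠ 0 := by linarith [hx.2]
  have : 1 + x ≠ 0 := by linarith [hx.1]
  have := hx.1.ne'
  simp only [VpotInX]
  field_simp

theorem tendsto_VpotInX_div_nhdsGT_zero (ε : ℝ) :
    Tendsto (fun x => VpotInX ε x / ((3/4) * psi x ^ (-(2:ℝ)))) (𝓝[>] 0) (𝓝 1) := by
  have h := ((tendsto_mul_VpotInX_nhdsGT_zero ε).mul
    tendsto_psi_sq_div_nhdsGT_zero).const_mul (4/3)
  norm_num at h
  refine h.congr' (eventually_of_mem (Ioo_mem_nhdsGT zero_lt_one) fun x hx => ?_)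
  have hpsi := (psi_mem_Ioo hx).1
  have := hx.1.ne'
  simp only
  rw [Real.rpow_neg hpsi.le, Real.rpow_two]
  field_simp

theorem tendsto_VpotInX_div_nhdsLT_one {ε : ℝ} (hC : 1/ε^2 - 1/4 ≠ 0) :
    Tendsto (fun x => VpotInX ε x / ((1/ε^2 - 1/4) * (psi 1 - psi x) ^ (-(2:ℝ))))
      (𝓝[<] 1) (𝓝 1) := by
  have h := ((tendsto_one_sub_mul_VpotInX_nhdsLT_one ε).mul
    tendsto_psi_one_sub_sq_div_nhdsLT_one).div_const (1/ε^2 - 1/4)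
  rw [div_mul_cancel₀ _ two_ne_zero, div_self hC] at h
  refine h.congr' (eventually_of_mem (Ioo_mem_nhdsLT zero_lt_one) fun x hx => ?_)
  have hpsi := sub_pos.2 (psi_mem_Ioo hx).2
  have : 1 - x ≠ 0 := by linarith [hx.2]
  simp only
  rw [Real.rpow_neg hpsi.le, Real.rpow_two]
  field_simp

theorem Vpot_asymptotics_general (ε : ℝ) (hε : ε ∈ Ioo (0:ℝ) 2) (φ : ℝ → ℝ)
    (hmaps : MapsTo φ (Icc 0 (psi 1)) (Icc (0:ℝ) 1))
    (hright : ∀ s ∈ Icc 0 (psi 1), psi (φ s) = s) :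
    Tendsto (fun s => Vpot ε φ s / ((3/4) * s ^ (-(2:ℝ))))
        (nhdsWithin 0 (Ioo 0 (psi 1))) (nhds 1) ∧
      Tendsto (fun s => Vpot ε φ s / ((1/ε^2 - 1/4) * (psi 1 - s) ^ (-(2:ℝ))))
        (nhdsWithin (psi 1) (Ioo 0 (psi 1))) (nhds 1) := by
  have hβ := psi_one_pos
  have hC : 1/ε^2 - 1/4 ≠ 0 := by
    have : 1/4 < 1/ε^2 := one_div_lt_one_div_of_lt (pow_pos hε.1 2) (by nlinarith [hε.1, hε.2])
    linarith
  rw [nhdsWithin_Ioo_eq_nhdsGT hβ, nhdsWithin_Ioo_eq_nhdsLT hβ]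
  constructor
  · refine ((tendsto_VpotInX_div_nhdsGT_zero ε).comp
      (tendsto_phi_nhdsGT_zero hmaps hright)).congr' ?_
    filter_upwards [Ioo_mem_nhdsGT hβ] with s hs
    rw [Function.comp_apply, ← Vpot_eq hmaps hright hs, hright s (Ioo_subset_Icc_self hs)]
  · refine ((tendsto_VpotInX_div_nhdsLT_one hC).comp
      (tendsto_phi_nhdsLT_psi_one hmaps hright)).congr' ?_
    filter_upwards [Ioo_mem_nhdsLT hβ] with s hs
    rw [Function.comp_apply, ← Vpot_eq hmaps hright hs, hright s (Ioo_subset_Icc_self hs)]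

/-- V(s) ∼ (3/4)s^{-2} as s → 0+ and V(s) ∼ (1/ε² − 1/4)(β−s)^{-2} as s → β−. -/
theorem Vpot_asymptotics (ε : ℝ) (hε : ε ∈ Ioo (0:ℝ) 2) (φ : ℝ → ℝ)
    (hmaps : MapsTo φ (Icc 0 (psi 1)) (Icc (0:ℝ) 1))
    (hleft : ∀ t ∈ Icc (0:ℝ) 1, φ (psi t) = t)
    (hright : ∀ s ∈ Icc 0 (psi 1), psi (φ s) = s) :
    Tendsto (fun s => Vpot ε φ s / ((3/4) * s ^ (-(2:ℝ))))
        (nhdsWithin 0 (Ioo 0 (psi 1))) (nhds 1) ∧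
      Tendsto (fun s => Vpot ε φ s / ((1/ε^2 - 1/4) * (psi 1 - s) ^ (-(2:ℝ))))
        (nhdsWithin (psi 1) (Ioo 0 (psi 1))) (nhds 1) :=
  Vpot_asymptotics_general ε hε φ hmaps hright
end
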